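/- A closed normal λ-term t has type D = (Q → P) → N in System F if and only if t = λα.n̲ for some natural number n, where n̲ is the n-th Church numeral. -/
import Mathlib


inductive Lam : Type
  | var : ℕ → Lam
  | app : Lam → Lam → Lam
  | lam : Lam → Lam
deriving DecidableEq

namespace Lam

/-- Lift (shift up by one) all de Bruijn indices ≥ d. -/
def lift (d : ℕ) : Lam → Lam
  | var n => if n < d then var n else var (n + 1)
  | app u v => app (lift d u) (lift d v)
  | lam u => lam (lift (d + 1) u)

/-- Capture-avoiding substitution of s for the de Bruijn index d. -/
def subst (d : ℕ) (s : Lam) : Lam → Lam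
  | var n => if n = d then s else if n < d then var n else var (n - 1)
  | app u v => app (subst d s u) (subst d s v)
  | lam u => lam (subst (d + 1) (lift 0 s) u)

/-- One-step β-reduction. -/
inductive Step : Lam → Lam → Prop
  | beta (u v : Lam) : Step (app (lam u) v) (subst 0 v u)
  | appL {u u' : Lam} (v : Lam) : Step u u' → Step (app u v) (app u' v)
  | appR (u : Lam) {v v' : Lam} : Step v v' → Step (app u v) (app u v')
  | lam {u u' : Lam} : Step u u' → Step (lam u) (lam u')

/-- β-equivalence: the reflexive-symmetric-transitive closure of β-reduction. -/
inductive BetaEq : Lam → Lam → Prop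
  | step {u v} : Step u v → BetaEq u v
  | refl (u) : BetaEq u u
  | symm {u v} : BetaEq u v → BetaEq v u
  | trans {u v w} : BetaEq u v → BetaEq v w → BetaEq u w

/-- One step of head reduction: contract the head redex. -/
inductive HeadStep : Lam → Lam → Prop
  | beta (u v : Lam) : HeadStep (app (lam u) v) (subst 0 v u)
  | appL {u u' : Lam} (v : Lam) : HeadStep u u' → (∀ w, u ≠ lam w) →
      HeadStep (app u v) (app u' v)
  | lam {u u' : Lam} : HeadStep u u' → HeadStep (lam u) (lam u')

/-- `Heads u v`: u head-reduces to v in finitely many steps. -/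
def Heads : Lam → Lam → Prop := Relation.ReflTransGen HeadStep

/-- A term is normal if it contains no β-redex. -/
def Normal (t : Lam) : Prop := ∀ u, ¬ Step t u

/-- All free de Bruijn indices of the term are < d. -/
def ClosedUnder : ℕ → Lam → Prop
  | d, var n => n < d
  | d, app u v => ClosedUnder d u ∧ ClosedUnder d v
  | d, lam u => ClosedUnder (d + 1) u

/-- A term is closed if it has no free variables. -/
def Closed (t : Lam) : Prop := ClosedUnder 0 t

/-- The de Bruijn index i occurs free in the term. -/
def FreeIn : ℕ → Lam → Prop
  | i, var n => n = i
  | i, app u v => FreeIn i u ∨ FreeIn i v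
  | i, lam u => FreeIn (i + 1) u

/-- n-fold application: (f^n x). -/
def iterApp : ℕ → Lam → Lam → Lam
  | 0, _, x => x
  | n + 1, f, x => app f (iterApp n f x)

/-- The n-th Church numeral λx.λf.(f^n x). -/
def church (n : ℕ) : Lam := lam (lam (iterApp n (var 0) (var 1)))

/-- T = λx.λy.x -/
def Ttm : Lam := lam (lam (var 1))

/-- F = λx.λy.y -/
def Ftm : Lam := lam (lam (var 0))

end Lam

/-- Types / formulas of System F, with de Bruijn type variables. -/
inductive Ty : Type
  | var : ℕ → Ty
  | bot : Ty
  | arrow : Ty → Ty → Ty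
  | all : Ty → Ty
deriving DecidableEq

namespace Ty

def lift (d : ℕ) : Ty → Ty
  | var n => if n < d then var n else var (n + 1)
  | bot => bot
  | arrow a b => arrow (lift d a) (lift d b)
  | all a => all (lift (d + 1) a)

/-- Capture-avoiding substitution of the type G for the type variable d: A[G/X]. -/
def subst (d : ℕ) (G : Ty) : Ty → Ty
  | var n => if n = d then G else if n < d then var n else var (n - 1)
  | bot => bot
  | arrow a b => arrow (subst d G a) (subst d G b)
  | all a => all (subst (d + 1) (lift 0 G) a)

/-- The type variable i occurs free in the type. -/
def Free : ℕ → Ty → Prop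
  | i, var n => n = i
  | _, bot => False
  | i, arrow a b => Free i a ∨ Free i b
  | i, all a => Free (i + 1) a

/-- ¬A := A → ⊥ -/
def neg (a : Ty) : Ty := arrow a bot

end Ty

/-- Curry-style System F typing: Γ ⊢_F t : A. -/
inductive Typing : List Ty → Lam → Ty → Prop
  | var {Γ : List Ty} {n : ℕ} {A : Ty} : Γ[n]? = some A → Typing Γ (Lam.var n) A
  | lam {Γ A B t} : Typing (A :: Γ) t B → Typing Γ (Lam.lam t) (Ty.arrow A B)
  | app {Γ A B u v} : Typing Γ u (Ty.arrow A B) → Typing Γ v A →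
      Typing Γ (Lam.app u v) B
  | allI {Γ A t} : Typing (Γ.map (Ty.lift 0)) t A → Typing Γ t (Ty.all A)
  | allE {Γ A t} (G : Ty) : Typing Γ t (Ty.all A) → Typing Γ t (Ty.subst 0 G A)

/-- Minimal second-order propositional logic (the logic of System F). -/
inductive Prov : List Ty → Ty → Prop
  | ax {Γ A} : A ∈ Γ → Prov Γ A
  | arrI {Γ A B} : Prov (A :: Γ) B → Prov Γ (Ty.arrow A B)
  | arrE {Γ A B} : Prov Γ (Ty.arrow A B) → Prov Γ A → Prov Γ B
  | allI {Γ A} : Prov (Γ.map (Ty.lift 0)) A → Prov Γ (Ty.all A)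
  | allE {Γ A} (G : Ty) : Prov Γ (Ty.all A) → Prov Γ (Ty.subst 0 G A)

/-- Classical second-order propositional logic F_C: F plus double-negation elimination. -/
inductive ProvC : List Ty → Ty → Prop
  | ax {Γ A} : A ∈ Γ → ProvC Γ A
  | arrI {Γ A B} : ProvC (A :: Γ) B → ProvC Γ (Ty.arrow A B)
  | arrE {Γ A B} : ProvC Γ (Ty.arrow A B) → ProvC Γ A → ProvC Γ B
  | allI {Γ A} : ProvC (Γ.map (Ty.lift 0)) A → ProvC Γ (Ty.all A)
  | allE {Γ A} (G : Ty) : ProvC Γ (Ty.all A) → ProvC Γ (Ty.subst 0 G A)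
  | dne {Γ A} : ProvC Γ (Ty.neg (Ty.neg A)) → ProvC Γ A

/-- The Gödel translation A ↦ A*. -/
def godel : Ty → Ty
  | Ty.var n => Ty.neg (Ty.var n)
  | Ty.bot => Ty.bot
  | Ty.arrow a b => Ty.arrow (godel a) (godel b)
  | Ty.all a => Ty.all (godel a)

/-- The type of booleans B = ∀X.(X → X → X). -/
def BoolTy : Ty := Ty.all (Ty.arrow (Ty.var 0) (Ty.arrow (Ty.var 0) (Ty.var 0)))

/-- The type of Church integers N = ∀X.(X → ((X → X) → X)). -/
def NatTy : Ty :=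
  Ty.all (Ty.arrow (Ty.var 0) (Ty.arrow (Ty.arrow (Ty.var 0) (Ty.var 0)) (Ty.var 0)))

/-- Peirce's law P = ∀X∀Y.(((X → Y) → X) → X). -/
def PeirceTy : Ty :=
  Ty.all (Ty.all (Ty.arrow (Ty.arrow (Ty.arrow (Ty.var 1) (Ty.var 0)) (Ty.var 1)) (Ty.var 1)))

/-- Q = P → ∀X.X. -/
def QTy : Ty := Ty.arrow PeirceTy (Ty.all (Ty.var 0))

/-- D = (Q → P) → N. -/
def DTy : Ty := Ty.arrow (Ty.arrow QTy PeirceTy) NatTy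

namespace SysFAux

def up (ρ : ℕ → Ty) : ℕ → Ty
  | 0 => Ty.var 0
  | n + 1 => Ty.lift 0 (ρ n)

def tsub (ρ : ℕ → Ty) : Ty → Ty
  | Ty.var n => ρ n
  | Ty.bot => Ty.bot
  | Ty.arrow a b => Ty.arrow (tsub ρ a) (tsub ρ b)
  | Ty.all a => Ty.all (tsub (up ρ) a)

def cons (G : Ty) (ρ : ℕ → Ty) : ℕ → Ty
  | 0 => G
  | n + 1 => ρ n

theorem lift_lift (A : Ty) : ∀ d e, e ≤ d →
    Ty.lift e (Ty.lift d A) = Ty.lift (d+1) (Ty.lift e A) := by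
  induction A with
  | var n => intro d e h; simp only [Ty.lift]; split_ifs <;> (try simp only [Ty.lift]) <;>
      (try split_ifs) <;> first | rfl | (exfalso; omega) | (congr 1; omega)
  | bot => intros; rfl
  | arrow a b iha ihb => intro d e h; simp [Ty.lift, iha _ _ h, ihb _ _ h]
  | all a ih => intro d e h; simp [Ty.lift, ih (d+1) (e+1) (by omega)]

theorem subst_lift_cancel (A : Ty) : ∀ d G, Ty.subst d G (Ty.lift d A) = A := by
  induction A with
  | var n => intro d G; simp only [Ty.lift]; split_ifs <;> simp only [Ty.subst] <;>
      (try split_ifs) <;> first | rfl | (exfalso; omega) | (congr 1; omega)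
  | bot => intros; rfl
  | arrow a b iha ihb => intro d G; simp [Ty.lift, Ty.subst, iha, ihb]
  | all a ih => intro d G; simp [Ty.lift, Ty.subst, ih]

theorem subst_lift_comm (A : Ty) : ∀ d e G, e ≤ d →
    Ty.subst (d+1) (Ty.lift e G) (Ty.lift e A) = Ty.lift e (Ty.subst d G A) := by
  induction A with
  | var n =>
      intro d e G h; simp only [Ty.lift, Ty.subst]
      split_ifs <;> (try simp only [Ty.lift, Ty.subst]) <;> (try split_ifs) <;>
        first | rfl | (exfalso; omega) | (congr 1; omega)
  | bot => intros; rfl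
  | arrow a b iha ihb => intro d e G h; simp [Ty.lift, Ty.subst, iha _ _ _ h, ihb _ _ _ h]
  | all a ih =>
      intro d e G h
      simp only [Ty.lift, Ty.subst, Ty.all.injEq]
      rw [lift_lift G e 0 (by omega), ih (d+1) (e+1) (Ty.lift 0 G) (by omega)]

def skip (d : ℕ) (ρ : ℕ → Ty) : ℕ → Ty := fun n => if n < d then ρ n else ρ (n+1)

theorem tsub_lift (A : Ty) : ∀ d ρ, tsub ρ (Ty.lift d A) = tsub (skip d ρ) A := by
  induction A with
  | var n => intro d ρ; simp only [Ty.lift]; split_ifs <;> simp only [tsub, skip] <;>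
      (try split_ifs) <;> first | rfl | (exfalso; omega)
  | bot => intros; rfl
  | arrow a b iha ihb => intro d ρ; simp [Ty.lift, tsub, iha, ihb]
  | all a ih =>
      intro d ρ
      simp only [Ty.lift, tsub, Ty.all.injEq]
      rw [ih]
      congr 1
      funext n
      cases n with
      | zero => simp [up, skip]
      | succ n => simp only [up, skip]; split_ifs <;> first | rfl | (exfalso; omega)

theorem lift_tsub (A : Ty) : ∀ d ρ, Ty.lift d (tsub ρ A) = tsub (fun n => Ty.lift d (ρ n)) A := by
  induction A with
  | var n => intros; rfl
  | bot => intros; rfl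
  | arrow a b iha ihb => intro d ρ; simp [Ty.lift, tsub, iha, ihb]
  | all a ih =>
      intro d ρ
      simp only [Ty.lift, tsub, Ty.all.injEq]
      rw [ih]
      congr 1
      funext n
      cases n with
      | zero => simp [up, Ty.lift]
      | succ n => simp only [up]; rw [lift_lift _ d 0 (by omega)]

theorem tsub_lift0 (A : Ty) (ρ : ℕ → Ty) :
    tsub ρ (Ty.lift 0 A) = tsub (fun n => ρ (n+1)) A := by
  rw [tsub_lift]
  all_goals refine congrArg (fun r => tsub r A) (funext fun n => ?_)
  simp [skip]

theorem tsub_up_lift0 (A : Ty) (ρ : ℕ → Ty) :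
    tsub (up ρ) (Ty.lift 0 A) = Ty.lift 0 (tsub ρ A) := by
  rw [tsub_lift0, lift_tsub]
  all_goals exact congrArg (fun r => tsub r A) (funext fun n => rfl)

theorem subst_tsub (A : Ty) : ∀ d G ρ,
    Ty.subst d G (tsub ρ A) = tsub (fun n => Ty.subst d G (ρ n)) A := by
  induction A with
  | var n => intros; rfl
  | bot => intros; rfl
  | arrow a b iha ihb => intro d G ρ; simp [Ty.subst, tsub, iha, ihb]
  | all a ih =>
      intro d G ρ
      simp only [Ty.subst, tsub, Ty.all.injEq]
      rw [ih]
      congr 1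
      funext n
      cases n with
      | zero => simp [up, Ty.subst]
      | succ n => simp only [up]; rw [subst_lift_comm _ d 0 G (by omega)]

def consAt (d : ℕ) (G : Ty) (ρ : ℕ → Ty) : ℕ → Ty :=
  fun n => if n = d then G else if n < d then ρ n else ρ (n-1)

theorem tsub_subst (A : Ty) : ∀ d G ρ,
    tsub ρ (Ty.subst d G A) = tsub (consAt d (tsub ρ G) ρ) A := by
  induction A with
  | var n => intro d G ρ; simp only [Ty.subst]; split_ifs <;> simp only [tsub, consAt] <;>
      (try split_ifs) <;> first | rfl | (exfalso; omega)
  | bot => intros; rfl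
  | arrow a b iha ihb => intro d G ρ; simp [Ty.subst, tsub, iha, ihb]
  | all a ih =>
      intro d G ρ
      simp only [Ty.subst, tsub, Ty.all.injEq]
      rw [ih]
      rw [tsub_up_lift0]
      congr 1
      funext n
      cases n with
      | zero => simp only [up, consAt]
                split_ifs <;> first | rfl | (exfalso; omega) | exact (by assumption : False).elim
      | succ n =>
          cases n <;>
            (simp only [up, consAt, Nat.add_sub_cancel] <;> split_ifs <;>
              first | rfl | (exfalso; omega) | (congr 1; omega))

theorem tsub_id (A : Ty) : tsub Ty.var A = A := by
  induction A with
  | var n => rfl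
  | bot => rfl
  | arrow a b iha ihb => simp [tsub, iha, ihb]
  | all a ih =>
      simp only [tsub, Ty.all.injEq]
      rw [show up Ty.var = Ty.var from funext fun n => by cases n <;> simp [up, Ty.lift]]
      all_goals exact ih

/-- derived identities -/
theorem tsub_subst0 (A G : Ty) (ρ : ℕ → Ty) :
    tsub ρ (Ty.subst 0 G A) = tsub (cons (tsub ρ G) ρ) A := by
  rw [tsub_subst]
  all_goals refine congrArg (fun r => tsub r A) (funext fun n => ?_)
  cases n <;> simp [consAt, cons]

theorem tsub_cons_lift (A G : Ty) (ρ : ℕ → Ty) :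
    tsub (cons G ρ) (Ty.lift 0 A) = tsub ρ A := by
  rw [tsub_lift]
  all_goals refine congrArg (fun r => tsub r A) (funext fun n => ?_)
  simp [skip, cons]

theorem subst0_tsub_up (A G : Ty) (ρ : ℕ → Ty) :
    Ty.subst 0 G (tsub (up ρ) A) = tsub (cons G ρ) A := by
  rw [subst_tsub]
  all_goals refine congrArg (fun r => tsub r A) (funext fun n => ?_)
  cases n with
      | zero => simp [up, cons, Ty.subst]
      | succ n => simp [up, cons, subst_lift_cancel]


/-! ### Typing under simultaneous type substitution -/

theorem map_tsub_cons_lift (Γ : List Ty) (G : Ty) (ρ : ℕ → Ty) :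
    (Γ.map (Ty.lift 0)).map (tsub (cons G ρ)) = Γ.map (tsub ρ) := by
  rw [List.map_map]
  exact List.map_congr_left fun A _ => tsub_cons_lift A G ρ

theorem typing_tsub {Γ t A} (h : Typing Γ t A) :
    ∀ ρ, Typing (Γ.map (tsub ρ)) t (tsub ρ A) := by
  induction h with
  | var hA =>
      intro ρ
      exact Typing.var (by simp [List.getElem?_map, hA])
  | lam _ ih => intro ρ; exact Typing.lam (ih ρ)
  | app _ _ ihu ihv => intro ρ; exact Typing.app (ihu ρ) (ihv ρ)
  | allI _ ih =>
      intro ρ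
      refine Typing.allI ?_
      have := ih (up ρ)
      rwa [show (List.map (Ty.lift 0) _).map (tsub (up ρ))
          = (List.map (tsub ρ) _).map (Ty.lift 0) by
        rw [List.map_map, List.map_map]
        exact List.map_congr_left fun B _ => tsub_up_lift0 B ρ] at this
  | allE G _ ih =>
      intro ρ
      have h2 := Typing.allE (tsub ρ G) (ih ρ)
      rwa [show Ty.subst 0 (tsub ρ G) (tsub (up ρ) _) = tsub ρ (Ty.subst 0 G _) by
        rw [subst0_tsub_up, tsub_subst0]] at h2

/-! ### Instantiation chains -/

inductive SubInst : Ty → Ty → Prop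
  | refl (T) : SubInst T T
  | peel {A T} (G : Ty) : SubInst (Ty.subst 0 G A) T → SubInst (Ty.all A) T

theorem SubInst.arrow_inv {A B T} (h : SubInst (Ty.arrow A B) T) : T = Ty.arrow A B := by
  cases h; rfl

theorem SubInst.var_inv {n T} (h : SubInst (Ty.var n) T) : T = Ty.var n := by
  cases h; rfl

/-! ### Generation lemmas -/

theorem gen_lam {Γ s C} (h : Typing Γ s C) :
    ∀ u, s = Lam.lam u → ∀ ρ T, SubInst (tsub ρ C) T →
      (∃ T', T = Ty.all T') ∨
      (∃ A B, T = Ty.arrow A B ∧ Typing (A :: Γ.map (tsub ρ)) u B) := by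
  induction h with
  | var _ => intro u hu; cases hu
  | app _ _ _ _ => intro u hu; cases hu
  | lam ht _ =>
      intro u hu ρ T hSI
      cases hu
      right
      rw [show tsub ρ (Ty.arrow _ _) = Ty.arrow (tsub ρ _) (tsub ρ _) from rfl] at hSI
      have := hSI.arrow_inv
      subst this
      exact ⟨_, _, rfl, typing_tsub ht ρ⟩
  | allI _ ih =>
      intro u hu ρ T hSI
      rw [show tsub ρ (Ty.all _) = Ty.all (tsub (up ρ) _) from rfl] at hSI
      cases hSI with
      | refl => exact Or.inl ⟨_, rfl⟩
      | peel G hSI =>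
          rw [subst0_tsub_up] at hSI
          rcases ih u hu (cons G ρ) T hSI with h | ⟨A, B, rfl, hty⟩
          · exact Or.inl h
          · right
            refine ⟨A, B, rfl, ?_⟩
            rwa [map_tsub_cons_lift] at hty
  | allE G _ ih =>
      intro u hu ρ T hSI
      refine ih u hu ρ T ?_
      rw [show tsub ρ (Ty.all _) = Ty.all (tsub (up ρ) _) from rfl]
      exact SubInst.peel (tsub ρ G) (by rwa [subst0_tsub_up, ← tsub_subst0])

theorem ctx_step (Γ : List Ty) (G : Ty) (ρ ρ'' : ℕ → Ty)
    (h : (Γ.map (Ty.lift 0)).map (tsub ρ'') = (Γ.map (Ty.lift 0)).map (tsub (cons G ρ))) :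
    Γ.map (tsub (fun m => ρ'' (m+1))) = Γ.map (tsub ρ) := by
  rw [List.map_map, List.map_map] at h
  calc Γ.map (tsub fun m => ρ'' (m+1))
      = Γ.map (tsub ρ'' ∘ Ty.lift 0) :=
        (List.map_congr_left fun B _ => tsub_lift0 B ρ'').symm
    _ = Γ.map (tsub (cons G ρ) ∘ Ty.lift 0) := h
    _ = Γ.map (tsub ρ) := List.map_congr_left fun B _ => tsub_cons_lift B G ρ

theorem gen_var {Γ s C} (h : Typing Γ s C) :
    ∀ n, s = Lam.var n → ∀ ρ T, SubInst (tsub ρ C) T → (∀ T', T ≠ Ty.all T') →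
      ∃ A₀ ρ', Γ[n]? = some A₀ ∧ SubInst (tsub ρ' A₀) T ∧
        Γ.map (tsub ρ') = Γ.map (tsub ρ) := by
  induction h with
  | lam _ _ => intro n hn; cases hn
  | app _ _ _ _ => intro n hn; cases hn
  | var hA =>
      intro n hn ρ T hSI hNA
      cases hn
      exact ⟨_, ρ, hA, hSI, rfl⟩
  | allI _ ih =>
      intro n hn ρ T hSI hNA
      rw [show tsub ρ (Ty.all _) = Ty.all (tsub (up ρ) _) from rfl] at hSI
      cases hSI with
      | refl => exact absurd rfl (hNA _)
      | peel G hSI =>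
          rw [subst0_tsub_up] at hSI
          rcases ih n hn (cons G ρ) T hSI hNA with ⟨A₀', ρ'', hget, hSI', hctx⟩
          rw [List.getElem?_map] at hget
          rcases Option.map_eq_some_iff.1 hget with ⟨A₀, hA₀, hl⟩
          subst hl
          refine ⟨A₀, fun m => ρ'' (m+1), hA₀, ?_, ?_⟩
          · rw [← tsub_lift0 A₀ ρ'']
            exact hSI'
          · exact ctx_step _ G ρ ρ'' hctx
  | allE G _ ih =>
      intro n hn ρ T hSI hNA
      refine ih n hn ρ T ?_ hNA
      rw [show tsub ρ (Ty.all _) = Ty.all (tsub (up ρ) _) from rfl]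
      exact SubInst.peel (tsub ρ G) (by rwa [subst0_tsub_up, ← tsub_subst0])

theorem gen_app {Γ s C} (h : Typing Γ s C) :
    ∀ u v, s = Lam.app u v → ∀ ρ T, SubInst (tsub ρ C) T → (∀ T', T ≠ Ty.all T') →
      ∃ A B, Typing (Γ.map (tsub ρ)) u (Ty.arrow A B) ∧
        Typing (Γ.map (tsub ρ)) v A ∧ SubInst B T := by
  induction h with
  | var _ => intro u v hu; cases hu
  | lam _ _ => intro u v hu; cases hu
  | app hu hv _ _ =>
      intro u v huv ρ T hSI hNA
      cases huv
      refine ⟨tsub ρ _, tsub ρ _, typing_tsub hu ρ, typing_tsub hv ρ, hSI⟩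
  | allI _ ih =>
      intro u v hu ρ T hSI hNA
      rw [show tsub ρ (Ty.all _) = Ty.all (tsub (up ρ) _) from rfl] at hSI
      cases hSI with
      | refl => exact absurd rfl (hNA _)
      | peel G hSI =>
          rw [subst0_tsub_up] at hSI
          rcases ih u v hu (cons G ρ) T hSI hNA with ⟨A, B, h1, h2, h3⟩
          rw [map_tsub_cons_lift] at h1 h2
          exact ⟨A, B, h1, h2, h3⟩
  | allE G _ ih =>
      intro u v hu ρ T hSI hNA
      refine ih u v hu ρ T ?_ hNA
      rw [show tsub ρ (Ty.all _) = Ty.all (tsub (up ρ) _) from rfl]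
      exact SubInst.peel (tsub ρ G) (by rwa [subst0_tsub_up, ← tsub_subst0])

/-! ### Erasure: typing to provability -/

theorem typing_prov {Γ t A} (h : Typing Γ t A) : Prov Γ A := by
  induction h with
  | var hA => exact Prov.ax (List.mem_iff_getElem?.2 ⟨_, hA⟩)
  | lam _ ih => exact Prov.arrI ih
  | app _ _ ihu ihv => exact Prov.arrE ihu ihv
  | allI _ ih => exact Prov.allI ih
  | allE G _ ih => exact Prov.allE G ih

/-! ### Classical semantics for the logic -/

def peval (ρ : ℕ → Prop) : Ty → Prop
  | Ty.var n => ρ n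
  | Ty.bot => False
  | Ty.arrow a b => peval ρ a → peval ρ b
  | Ty.all a => ∀ p : Prop, peval (fun n => match n with | 0 => p | n+1 => ρ n) a

theorem peval_ext {A : Ty} : ∀ {ρ ρ' : ℕ → Prop}, (∀ n, ρ n ↔ ρ' n) →
    (peval ρ A ↔ peval ρ' A) := by
  induction A with
  | var n => intro ρ ρ' h; exact h n
  | bot => intro ρ ρ' h; exact Iff.rfl
  | arrow a b iha ihb => intro ρ ρ' h; exact imp_congr (iha h) (ihb h)
  | all a ih =>
      intro ρ ρ' h
      refine forall_congr' fun p => ih fun n => ?_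
      cases n <;> simp [h _]

theorem peval_lift {A : Ty} : ∀ {d ρ},
    peval ρ (Ty.lift d A) ↔ peval (fun n => if n < d then ρ n else ρ (n+1)) A := by
  induction A with
  | var n =>
      intro d ρ
      simp only [Ty.lift]
      split_ifs with h <;> simp [peval, h]
  | bot => intro d ρ; exact Iff.rfl
  | arrow a b iha ihb => intro d ρ; exact imp_congr iha ihb
  | all a ih =>
      intro d ρ
      refine forall_congr' fun p => Iff.trans ih (peval_ext fun n => ?_)
      cases n with
      | zero => simp
      | succ n => simp only []; split_ifs <;> first | rfl | (exfalso; omega) |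
          (simp; exfalso; omega)

theorem peval_subst {A : Ty} : ∀ {d G ρ},
    peval ρ (Ty.subst d G A) ↔
      peval (fun n => if n = d then peval ρ G else if n < d then ρ n else ρ (n-1)) A := by
  induction A with
  | var n =>
      intro d G ρ
      simp only [Ty.subst, peval]
      split_ifs <;> simp [peval]
  | bot => intro d G ρ; exact Iff.rfl
  | arrow a b iha ihb => intro d G ρ; exact imp_congr iha ihb
  | all a ih =>
      intro d G ρ
      refine forall_congr' fun p => Iff.trans ih (peval_ext fun n => ?_)
      cases n with
      | zero => simp
      | succ n =>
          simp only [Nat.add_sub_cancel]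
          rcases lt_trichotomy n d with h | h | h
          · rw [if_neg (by omega), if_pos (by omega), if_neg (by omega), if_pos h]
          · subst h
            rw [if_pos rfl, if_pos rfl]
            exact Iff.trans peval_lift (peval_ext fun m => by simp)
          · obtain ⟨m, rfl⟩ : ∃ m, n = m + 1 := ⟨n - 1, by omega⟩
            rw [if_neg (by omega), if_neg (by omega), if_neg (by omega), if_neg (by omega)]
            simp

theorem prov_sound {Γ A} (h : Prov Γ A) :
    ∀ ρ : ℕ → Prop, (∀ B ∈ Γ, peval ρ B) → peval ρ A := by
  induction h with
  | ax hA => intro ρ hΓ; exact hΓ _ hA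
  | arrI _ ih =>
      intro ρ hΓ
      intro ha
      exact ih ρ (by intro B hB; rcases List.mem_cons.1 hB with rfl | hB
                     exacts [ha, hΓ _ hB])
  | arrE _ _ ihab iha => intro ρ hΓ; exact ihab ρ hΓ (iha ρ hΓ)
  | allI _ ih =>
      intro ρ hΓ p
      refine ih _ fun B hB => ?_
      rcases List.mem_map.1 hB with ⟨B₀, hB₀, rfl⟩
      have h := hΓ _ hB₀
      refine peval_lift.2 ((peval_ext fun n => ?_).2 h)
      simp
  | allE G _ ih =>
      intro ρ hΓ
      have h := ih ρ hΓ (peval ρ G)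
      refine peval_subst.2 ((peval_ext fun n => ?_).2 h)
      cases n <;> simp

theorem peirce_valid (ρ : ℕ → Prop) : peval ρ PeirceTy := by
  intro p q
  show ((p → q) → p) → p
  tauto

theorem qty_false (ρ : ℕ → Prop) : ¬ peval ρ QTy := by
  intro h
  exact h (peirce_valid _) False

theorem c0_true (ρ : ℕ → Prop) : peval ρ (Ty.arrow QTy PeirceTy) := by
  intro _
  exact peirce_valid _

theorem no_prov_q {Γ : List Ty} (hΓ : ∀ B ∈ Γ, peval (fun _ => True) B) :
    ¬ Prov Γ QTy :=
  fun h => qty_false _ (prov_sound h _ hΓ)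

/-! ### Normal forms -/

theorem normal_appL {u v} (h : Lam.Normal (Lam.app u v)) : Lam.Normal u :=
  fun w hw => h _ (Lam.Step.appL v hw)

theorem normal_appR {u v} (h : Lam.Normal (Lam.app u v)) : Lam.Normal v :=
  fun w hw => h _ (Lam.Step.appR u hw)

theorem normal_lam {u} (h : Lam.Normal (Lam.lam u)) : Lam.Normal u :=
  fun w hw => h _ (Lam.Step.lam hw)

theorem normal_app_nolam {u v w} (h : Lam.Normal (Lam.app u v)) : u ≠ Lam.lam w :=
  fun he => by subst he; exact h _ (Lam.Step.beta w v)

theorem closed_normal_lam : ∀ t, Lam.Normal t → Lam.ClosedUnder 0 t → ∃ u, t = Lam.lam u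
  | Lam.var n, _, hc => absurd hc (by simp [Lam.ClosedUnder])
  | Lam.lam u, _, _ => ⟨u, rfl⟩
  | Lam.app a b, hn, hc => by
      obtain ⟨w, rfl⟩ := closed_normal_lam a (normal_appL hn) hc.1
      exact absurd rfl (normal_app_nolam hn)

/-! ### Concrete types -/

def C0 : Ty := Ty.arrow QTy PeirceTy

def NBody : Ty := Ty.arrow (Ty.var 0) (Ty.arrow (Ty.arrow (Ty.var 0) (Ty.var 0)) (Ty.var 0))

def T1 : Ty := Ty.arrow (Ty.arrow (Ty.var 0) (Ty.var 0)) (Ty.var 0)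

def G1 : List Ty := [Ty.var 0, C0]

def G2 : List Ty := [Ty.arrow (Ty.var 0) (Ty.var 0), Ty.var 0, C0]

theorem tsub_C0 (ρ : ℕ → Ty) : tsub ρ C0 = C0 := by
  simp [C0, QTy, PeirceTy, tsub, up, Ty.lift]

theorem map_tsub_id (Γ : List Ty) : Γ.map (tsub Ty.var) = Γ :=
  (List.map_congr_left fun B _ => tsub_id B).trans (List.map_id Γ)

theorem subinst_nat : SubInst NatTy NBody := by
  have h : Ty.subst 0 (Ty.var 0) NBody = NBody := by decide
  exact SubInst.peel (Ty.var 0) (h ▸ SubInst.refl NBody)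

theorem nbody_not_all : ∀ T', NBody ≠ Ty.all T' := fun T' h => by simp [NBody] at h

theorem t1_not_all : ∀ T', T1 ≠ Ty.all T' := fun T' h => by simp [T1] at h

theorem arrow_not_all {A B : Ty} : ∀ T', Ty.arrow A B ≠ Ty.all T' := fun T' h => by simp at h

theorem var_not_all {n : ℕ} : ∀ T', Ty.var n ≠ Ty.all T' := fun T' h => by simp at h

/-! ### Semantic facts -/

theorem peval_C0 (ρ : ℕ → Prop) : peval ρ C0 := fun _ => peirce_valid ρ

theorem no_q_G0 : ¬ Prov [C0] QTy := by
  refine no_prov_q ?_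
  intro B hB
  simp at hB
  subst hB
  exact peval_C0 _

theorem no_q_G1 : ¬ Prov G1 QTy := by
  refine no_prov_q ?_
  intro B hB
  simp [G1] at hB
  rcases hB with rfl | rfl
  · exact trivial
  · exact peval_C0 _

theorem no_q_G2 : ¬ Prov G2 QTy := by
  refine no_prov_q ?_
  intro B hB
  simp [G2] at hB
  rcases hB with rfl | rfl | rfl
  · exact fun h => h
  · exact trivial
  · exact peval_C0 _

/-! ### Spine analysis -/

theorem spine0 : ∀ v, Lam.Normal v → (∀ w, v ≠ Lam.lam w) → ∀ T, Typing [C0] v T →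
    (∀ T', T ≠ Ty.all T') → v = Lam.var 0 ∧ T = C0 := by
  intro v
  induction v with
  | lam u ih => intro _ hnl T _ _; exact absurd rfl (hnl u)
  | var n =>
      intro _ _ T h hNA
      obtain ⟨A₀, ρ', hget, hSI, hctx⟩ :=
        gen_var h n rfl Ty.var T (by rw [tsub_id]; exact SubInst.refl T) hNA
      rcases n with _ | n
      · simp only [List.getElem?_cons_zero, Option.some.injEq] at hget
        subst hget
        rw [tsub_C0] at hSI
        exact ⟨rfl, hSI.arrow_inv⟩
      · simp at hget
  | app f w ihf ihw =>
      intro hn hnl T h hNA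
      obtain ⟨A, B, hf, hw, hB⟩ := gen_app h f w rfl Ty.var T
        (by rw [tsub_id]; exact SubInst.refl T) hNA
      rw [map_tsub_id] at hf hw
      obtain ⟨rfl, hAB⟩ := ihf (normal_appL hn) (fun w' => normal_app_nolam hn)
        (Ty.arrow A B) hf arrow_not_all
      obtain ⟨rfl, rfl⟩ : A = QTy ∧ B = PeirceTy := by
        rw [C0] at hAB
        exact ⟨congrArg (fun x => match x with | Ty.arrow a _ => a | _ => A) hAB,
               congrArg (fun x => match x with | Ty.arrow _ b => b | _ => B) hAB⟩
      exact absurd (typing_prov hw) no_q_G0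

theorem spine1 : ∀ v, Lam.Normal v → (∀ w, v ≠ Lam.lam w) → ∀ T, Typing G1 v T →
    (∀ T', T ≠ Ty.all T') →
    (v = Lam.var 0 ∧ T = Ty.var 0) ∨ (v = Lam.var 1 ∧ T = C0) := by
  intro v
  induction v with
  | lam u ih => intro _ hnl T _ _; exact absurd rfl (hnl u)
  | var n =>
      intro _ _ T h hNA
      obtain ⟨A₀, ρ', hget, hSI, hctx⟩ :=
        gen_var h n rfl Ty.var T (by rw [tsub_id]; exact SubInst.refl T) hNA
      rw [map_tsub_id] at hctx
      have hρ0 : ρ' 0 = Ty.var 0 := by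
        have := congrArg (fun l => l[0]?) hctx
        simpa [G1, tsub] using this
      rcases n with _ | _ | n
      · simp only [G1, List.getElem?_cons_zero, Option.some.injEq] at hget
        subst hget
        rw [show tsub ρ' (Ty.var 0) = ρ' 0 from rfl, hρ0] at hSI
        exact Or.inl ⟨rfl, hSI.var_inv⟩
      · simp only [G1, List.getElem?_cons_succ, List.getElem?_cons_zero,
          Option.some.injEq] at hget
        subst hget
        rw [tsub_C0] at hSI
        exact Or.inr ⟨rfl, hSI.arrow_inv⟩
      · simp [G1] at hget
  | app f w ihf ihw =>
      intro hn hnl T h hNA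
      obtain ⟨A, B, hf, hw, hB⟩ := gen_app h f w rfl Ty.var T
        (by rw [tsub_id]; exact SubInst.refl T) hNA
      rw [map_tsub_id] at hf hw
      rcases ihf (normal_appL hn) (fun w' => normal_app_nolam hn)
          (Ty.arrow A B) hf arrow_not_all with ⟨rfl, hAB⟩ | ⟨rfl, hAB⟩
      · exact absurd hAB (by simp)
      · obtain rfl : A = QTy := by
          rw [C0] at hAB
          exact congrArg (fun x => match x with | Ty.arrow a _ => a | _ => A) hAB
        exact absurd (typing_prov hw) no_q_G1

theorem spine2 : ∀ v, Lam.Normal v → (∀ w, v ≠ Lam.lam w) → ∀ T, Typing G2 v T →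
    (∀ T', T ≠ Ty.all T') →
    (v = Lam.var 0 ∧ T = Ty.arrow (Ty.var 0) (Ty.var 0)) ∨
    (v = Lam.var 1 ∧ T = Ty.var 0) ∨
    (v = Lam.var 2 ∧ T = C0) ∨
    (∃ w, v = Lam.app (Lam.var 0) w ∧ T = Ty.var 0 ∧ Typing G2 w (Ty.var 0) ∧
      Lam.Normal w) := by
  intro v
  induction v with
  | lam u ih => intro _ hnl T _ _; exact absurd rfl (hnl u)
  | var n =>
      intro _ _ T h hNA
      obtain ⟨A₀, ρ', hget, hSI, hctx⟩ :=
        gen_var h n rfl Ty.var T (by rw [tsub_id]; exact SubInst.refl T) hNA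
      rw [map_tsub_id] at hctx
      have hρ0 : ρ' 0 = Ty.var 0 := by
        have := congrArg (fun l => l[1]?) hctx
        simpa [G2, tsub] using this
      rcases n with _ | _ | _ | n
      · simp only [G2, List.getElem?_cons_zero, Option.some.injEq] at hget
        subst hget
        rw [show tsub ρ' (Ty.arrow (Ty.var 0) (Ty.var 0))
            = Ty.arrow (ρ' 0) (ρ' 0) from rfl, hρ0] at hSI
        exact Or.inl ⟨rfl, hSI.arrow_inv⟩
      · simp only [G2, List.getElem?_cons_succ, List.getElem?_cons_zero,
          Option.some.injEq] at hget
        subst hget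
        rw [show tsub ρ' (Ty.var 0) = ρ' 0 from rfl, hρ0] at hSI
        exact Or.inr (Or.inl ⟨rfl, hSI.var_inv⟩)
      · simp only [G2, List.getElem?_cons_succ, List.getElem?_cons_zero,
          Option.some.injEq] at hget
        subst hget
        rw [tsub_C0] at hSI
        exact Or.inr (Or.inr (Or.inl ⟨rfl, hSI.arrow_inv⟩))
      · simp [G2] at hget
  | app f w ihf ihw =>
      intro hn hnl T h hNA
      obtain ⟨A, B, hf, hw, hB⟩ := gen_app h f w rfl Ty.var T
        (by rw [tsub_id]; exact SubInst.refl T) hNA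
      rw [map_tsub_id] at hf hw
      rcases ihf (normal_appL hn) (fun w' => normal_app_nolam hn)
          (Ty.arrow A B) hf arrow_not_all with
        ⟨rfl, hAB⟩ | ⟨rfl, hAB⟩ | ⟨rfl, hAB⟩ | ⟨w', -, hT', -, -⟩
      · obtain ⟨rfl, rfl⟩ : A = Ty.var 0 ∧ B = Ty.var 0 := by
          injection hAB with h1 h2
          exact ⟨h1, h2⟩
        have := hB.var_inv
        subst this
        exact Or.inr (Or.inr (Or.inr ⟨w, rfl, rfl, hw, normal_appR hn⟩))
      · exact absurd hAB (by simp)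
      · obtain rfl : A = QTy := by
          rw [C0] at hAB
          exact congrArg (fun x => match x with | Ty.arrow a _ => a | _ => A) hAB
        exact absurd (typing_prov hw) no_q_G2
      · exact absurd hT' (by simp)

/-! ### The body of a numeral -/

theorem church_body : ∀ u, Lam.Normal u → Typing G2 u (Ty.var 0) →
    ∃ n, u = Lam.iterApp n (Lam.var 0) (Lam.var 1) := by
  intro u
  induction u with
  | lam u ih =>
      intro hn h
      rcases gen_lam h u rfl Ty.var (Ty.var 0)
          (by rw [tsub_id]; exact SubInst.refl _) with ⟨T', hT'⟩ | ⟨A, B, hAB, -⟩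
      · exact absurd hT' (by simp)
      · exact absurd hAB (by simp)
  | var n =>
      intro hn h
      rcases spine2 _ hn (by simp) _ h var_not_all with
        ⟨hv, hT⟩ | ⟨hv, hT⟩ | ⟨hv, hT⟩ | ⟨w, hv, -⟩
      · exact absurd hT (by simp)
      · exact ⟨0, hv⟩
      · exact absurd hT (by decide)
      · exact absurd hv (by simp)
  | app f w ihf ihw =>
      intro hn h
      rcases spine2 _ hn (by simp) _ h var_not_all with
        ⟨hv, hT⟩ | ⟨hv, hT⟩ | ⟨hv, hT⟩ | ⟨w', hv, -, hw', hnw'⟩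
      · exact absurd hv (by simp)
      · exact absurd hv (by simp)
      · exact absurd hv (by simp)
      · obtain ⟨rfl, rfl⟩ : f = Lam.var 0 ∧ w' = w := by
          injection hv with h1 h2
          exact ⟨h1, h2.symm⟩
        obtain ⟨n, rfl⟩ := ihw (normal_appR hn) hw'
        exact ⟨n + 1, rfl⟩

/-! ### Putting the forward direction together -/

theorem forward {t : Lam} (hnorm : Lam.Normal t) (hcl : Lam.Closed t)
    (h : Typing [] t DTy) : ∃ n : ℕ, t = Lam.lam (Lam.church n) := by
  obtain ⟨u, rfl⟩ := closed_normal_lam t hnorm hcl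
  have hnu : Lam.Normal u := normal_lam hnorm
  -- u : NatTy in context [C0]
  have hu : Typing [C0] u NatTy := by
    rcases gen_lam h u rfl Ty.var DTy (by rw [tsub_id]; exact SubInst.refl _) with
      ⟨T', hT'⟩ | ⟨A, B, hAB, hty⟩
    · exact absurd hT' (by simp [DTy])
    · obtain ⟨rfl, rfl⟩ : A = C0 ∧ B = NatTy := by
        rw [show DTy = Ty.arrow C0 NatTy from rfl] at hAB
        injection hAB with h1 h2
        exact ⟨h1.symm, h2.symm⟩
      simpa using hty
  -- u must be a lambda
  obtain ⟨u₁, rfl⟩ : ∃ u₁, u = Lam.lam u₁ := by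
    cases u with
    | lam u₁ => exact ⟨u₁, rfl⟩
    | var n =>
        obtain ⟨A₀, ρ', hget, hSI, -⟩ := gen_var hu n rfl Ty.var NBody
          (by rw [tsub_id]; exact subinst_nat) nbody_not_all
        rcases n with _ | n
        · simp only [List.getElem?_cons_zero, Option.some.injEq] at hget
          subst hget
          rw [tsub_C0] at hSI
          exact absurd hSI.arrow_inv (by decide)
        · simp at hget
    | app f w =>
        obtain ⟨A, B, hf, hw, -⟩ := gen_app hu f w rfl Ty.var NBody
          (by rw [tsub_id]; exact subinst_nat) nbody_not_all
        rw [map_tsub_id] at hf hw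
        obtain ⟨-, hAB⟩ := spine0 f (normal_appL hnu) (fun w' => normal_app_nolam hnu)
          (Ty.arrow A B) hf arrow_not_all
        obtain rfl : A = QTy := by
          rw [C0] at hAB
          exact congrArg (fun x => match x with | Ty.arrow a _ => a | _ => A) hAB
        exact absurd (typing_prov hw) no_q_G0
  have hnu₁ : Lam.Normal u₁ := normal_lam hnu
  -- u₁ : T1 in context G1
  have hu₁ : Typing G1 u₁ T1 := by
    rcases gen_lam hu u₁ rfl Ty.var NBody (by rw [tsub_id]; exact subinst_nat) with
      ⟨T', hT'⟩ | ⟨A, B, hAB, hty⟩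
    · exact absurd hT' (nbody_not_all _)
    · obtain ⟨rfl, rfl⟩ : A = Ty.var 0 ∧ B = T1 := by
        rw [show NBody = Ty.arrow (Ty.var 0) T1 from rfl] at hAB
        injection hAB with h1 h2
        exact ⟨h1.symm, h2.symm⟩
      rw [show (Ty.var 0 :: List.map (tsub Ty.var) [C0]) = G1 by
        rw [map_tsub_id]; rfl] at hty
      exact hty
  -- u₁ must be a lambda
  obtain ⟨u₂, rfl⟩ : ∃ u₂, u₁ = Lam.lam u₂ := by
    cases u₁ with
    | lam u₂ => exact ⟨u₂, rfl⟩
    | var n =>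
        rcases spine1 _ hnu₁ (by simp) _ hu₁ t1_not_all with ⟨-, hT⟩ | ⟨-, hT⟩
        · exact absurd hT (by decide)
        · exact absurd hT (by decide)
    | app f w =>
        obtain ⟨A, B, hf, hw, -⟩ := gen_app hu₁ f w rfl Ty.var T1
          (by rw [tsub_id]; exact SubInst.refl _) t1_not_all
        rw [map_tsub_id] at hf hw
        rcases spine1 f (normal_appL hnu₁) (fun w' => normal_app_nolam hnu₁)
            (Ty.arrow A B) hf arrow_not_all with ⟨-, hAB⟩ | ⟨-, hAB⟩
        · exact absurd hAB (by simp)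
        · obtain rfl : A = QTy := by
            rw [C0] at hAB
            exact congrArg (fun x => match x with | Ty.arrow a _ => a | _ => A) hAB
          exact absurd (typing_prov hw) no_q_G1
  have hnu₂ : Lam.Normal u₂ := normal_lam hnu₁
  -- u₂ : var 0 in context G2
  have hu₂ : Typing G2 u₂ (Ty.var 0) := by
    rcases gen_lam hu₁ u₂ rfl Ty.var T1 (by rw [tsub_id]; exact SubInst.refl _) with
      ⟨T', hT'⟩ | ⟨A, B, hAB, hty⟩
    · exact absurd hT' (t1_not_all _)
    · obtain ⟨rfl, rfl⟩ : A = Ty.arrow (Ty.var 0) (Ty.var 0) ∧ B = Ty.var 0 := by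
        rw [show T1 = Ty.arrow (Ty.arrow (Ty.var 0) (Ty.var 0)) (Ty.var 0) from rfl] at hAB
        injection hAB with h1 h2
        exact ⟨h1.symm, h2.symm⟩
      rw [show (Ty.arrow (Ty.var 0) (Ty.var 0) :: List.map (tsub Ty.var) G1) = G2 by
        rw [map_tsub_id]; rfl] at hty
      exact hty
  obtain ⟨n, rfl⟩ := church_body u₂ hnu₂ hu₂
  exact ⟨n, rfl⟩

/-! ### Backward direction -/

theorem iter_typing : ∀ n, Typing G2 (Lam.iterApp n (Lam.var 0) (Lam.var 1)) (Ty.var 0)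
  | 0 => Typing.var (by simp [G2])
  | n + 1 => Typing.app (Typing.var (by simp [G2])) (iter_typing n)

theorem backward (n : ℕ) : Typing [] (Lam.lam (Lam.church n)) DTy := by
  refine Typing.lam ?_
  show Typing [C0] (Lam.church n) NatTy
  refine Typing.allI ?_
  rw [show List.map (Ty.lift 0) [C0] = [C0] by simp [C0, QTy, PeirceTy, Ty.lift]]
  show Typing [C0] (Lam.lam (Lam.lam (Lam.iterApp n (Lam.var 0) (Lam.var 1)))) NBody
  exact Typing.lam (Typing.lam (iter_typing n))

end SysFAux


/-- A closed normal term has type D = (Q → P) → N iff it is λα.n̲ for some n. -/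
theorem systemF_D_characterization {t : Lam}
    (hnorm : Lam.Normal t) (hcl : Lam.Closed t) :
    Typing [] t DTy ↔ ∃ n : ℕ, t = Lam.lam (Lam.church n) := by
  constructor
  · exact SysFAux.forward hnorm hcl
  · rintro ⟨n, rfl⟩
    exact SysFAux.backward n
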